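/- arXiv:1809.01975 — 5 statements merged into one kernel-verified Lean document; each statement's English description precedes it below -/
import Mathlib

section
/- Consider the model with design (DD) or (RD) and suppose the noise distribution satisfies P[ξ_1 ≤ -1/2] < P[ξ_1 ≤ 1/2]. Let N = #{i ∈ {1,…,n} : X_i ≤ h}, S = #{i ∈ {1,…,N} : Y_i ≤ 1/2}, and define the test T_n^0 = 1(S ≤ cN), where c is any fixed number strictly between P[ξ_1 ≤ -1/2] and P[ξ_1 ≤ 1/2]. If n·h → ∞ as n → ∞, then T_n^0 is consistent on the class S_0, i.e. γ_n(T_n^0, S_0) = P_∅[T_n^0 = 1] + sup_{G ∈ S_0, |G| ≥ h} P_G[T_n^0 = 0] → 0. -/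
open MeasureTheory ProbabilityTheory Set Filter Real
open scoped ENNReal NNReal Topology symmDiff

/-- Lebesgue measure of the symmetric difference `[a,b] Δ [c,d]`. -/
noncomputable def sd (a b c d : ℝ) : ℝ :=
  (MeasureTheory.volume ((Set.Icc a b) ∆ (Set.Icc c d))).toReal

/-- Deterministic regular design (DD): the i-th (1-based) design point is i/n. -/
def IsDD {Ω : Type*} (n : ℕ) (X : Fin n → Ω → ℝ) : Prop :=
  ∀ i ω, X i ω = ((i : ℕ) + 1 : ℝ) / n

/-- Random uniform design (RD): the design is the increasing reordering of
n i.i.d. uniform random variables on `[0,1]`. -/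
def IsRD {Ω : Type*} [MeasurableSpace Ω] (P : MeasureTheory.Measure Ω) (n : ℕ)
    (X : Fin n → Ω → ℝ) : Prop :=
  (∀ i, Measurable (X i)) ∧ (∀ ω, Monotone fun i => X i ω) ∧
  ∃ U : Fin n → Ω → ℝ, (∀ i, Measurable (U i)) ∧
    ProbabilityTheory.iIndepFun U P ∧
    (∀ i, MeasureTheory.Measure.map (U i) P
        = MeasureTheory.volume.restrict (Set.Icc (0:ℝ) 1)) ∧
    (∀ ω, ∃ p : Equiv.Perm (Fin n), ∀ i, X i ω = U (p i) ω)

/-- i.i.d. subgaussian noise with parameter σ. -/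
def IsIidSubgaussian {Ω : Type*} [MeasurableSpace Ω] (P : MeasureTheory.Measure Ω)
    (n : ℕ) (ξ : Fin n → Ω → ℝ) (σ : ℝ) : Prop :=
  (∀ i, Measurable (ξ i)) ∧
  ProbabilityTheory.iIndepFun ξ P ∧
  (∀ i j, MeasureTheory.Measure.map (ξ i) P = MeasureTheory.Measure.map (ξ j) P) ∧
  (∀ (i : Fin n) (u : ℝ), ∫ ω, Real.exp (u * ξ i ω) ∂P ≤ Real.exp (σ^2 * u^2 / 2))

/-- i.i.d. centered Gaussian noise with variance σ². -/
def IsIidGaussian {Ω : Type*} [MeasurableSpace Ω] (P : MeasureTheory.Measure Ω)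
    (n : ℕ) (ξ : Fin n → Ω → ℝ) (σ : ℝ) : Prop :=
  (∀ i, Measurable (ξ i)) ∧
  ProbabilityTheory.iIndepFun ξ P ∧
  (∀ i, MeasureTheory.Measure.map (ξ i) P
      = ProbabilityTheory.gaussianReal 0 ⟨σ^2, sq_nonneg σ⟩)

/-- The noise vector is independent of the design vector. -/
def NoiseIndepDesign {Ω : Type*} [MeasurableSpace Ω] (P : MeasureTheory.Measure Ω)
    (n : ℕ) (X ξ : Fin n → Ω → ℝ) : Prop :=
  ProbabilityTheory.IndepFun (fun ω => fun i => X i ω) (fun ω => fun i => ξ i ω) P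

/-- The observed label attached to the design point `X i` when the true segment
is `[a,b]`: `Y i = 1(X i ∈ [a,b]) + ξ i`. -/
noncomputable def obsY {Ω : Type*} {n : ℕ} (X ξ : Fin n → Ω → ℝ) (a b : ℝ)
    (i : Fin n) (ω : Ω) : ℝ :=
  (if X i ω ∈ Set.Icc a b then (1:ℝ) else 0) + ξ i ω

/-!
Only the design points in `[0, h]` matter; let `N` be their number and
`S_t = #{i : Xᵢ ≤ h, ξᵢ ≤ t}`. Given the design, the `1(ξᵢ ≤ t)` are i.i.d. Bernoulli(`p_t`), so
`S_t - p_t N` is centred with second moment `p_t (1 - p_t) E N`. Under `G = ∅` the test errs when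
`S_{1/2} ≤ c N`; under `G = [0, θ]` with `θ ≥ h` every point counted by `N` lies in `G`, its label
is `1 + ξᵢ`, and the test errs when `S_{-1/2} > c N`. Either way `|S_t - p_t N| ≥ |p_t - c| N`.
Chebyshev's inequality, together with `Var N ≤ E N` (trivially for (DD), as a binomial count for
(RD)), bounds both errors by `O(1 / E N)`, and `E N → ∞` because `n h → ∞`.
-/

section

variable {Ω : Type*}

section Combinatorics

variable {n : ℕ}

noncomputable def designCount (X : Fin n → Ω → ℝ) (h : ℝ) (ω : Ω) : ℝ :=
  ((Finset.univ.filter fun i => X i ω ≤ h).card : ℝ)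

lemma designCount_eq_sum (X : Fin n → Ω → ℝ) (h : ℝ) (ω : Ω) :
    designCount X h ω = ∑ i, (Iic h).indicator 1 (X i ω) := by
  rw [designCount, Finset.natCast_card_filter]
  simp only [Set.indicator_apply, Set.mem_Iic, Pi.one_apply]

lemma natCast_card_filter_le_and_le (X ξ : Fin n → Ω → ℝ) (h t : ℝ) (ω : Ω) :
    ((Finset.univ.filter fun i => X i ω ≤ h ∧ ξ i ω ≤ t).card : ℝ)
      = ∑ i, (Iic h).indicator 1 (X i ω) * (Iic t).indicator 1 (ξ i ω) := by
  rw [Finset.natCast_card_filter]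
  refine Finset.sum_congr rfl fun i _ => ?_
  by_cases hX : X i ω ≤ h <;> by_cases hξ : ξ i ω ≤ t <;> simp [hX, hξ]

lemma designCount_eq_of_perm {X U : Fin n → Ω → ℝ} {h : ℝ} {ω : Ω}
    (hXU : ∃ σ : Equiv.Perm (Fin n), ∀ i, X i ω = U (σ i) ω) :
    designCount X h ω = designCount U h ω := by
  obtain ⟨σ, hσ⟩ := hXU
  simp_rw [designCount_eq_sum, hσ]
  exact Equiv.sum_comp σ fun j => (Iic h).indicator 1 (U j ω)

lemma designCount_of_const {X : Fin n → Ω → ℝ} {x : Fin n → ℝ} (hX : ∀ i ω, X i ω = x i)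
    (h : ℝ) (ω : Ω) : designCount X h ω = ((Finset.univ.filter fun i => x i ≤ h).card : ℝ) := by
  simp [designCount, hX]

lemma filter_obsY_le_eq {X ξ : Fin n → Ω → ℝ} {h a b : ℝ} (ha : a ≤ 0) (hb : h ≤ b) {ω : Ω}
    (hω : ∀ i, 0 ≤ X i ω) :
    (Finset.univ.filter fun i => X i ω ≤ h ∧ obsY X ξ a b i ω ≤ 1/2)
      = Finset.univ.filter fun i => X i ω ≤ h ∧ ξ i ω ≤ -1/2 := by
  refine Finset.filter_congr fun i _ => and_congr_right fun hXh => ?_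
  rw [obsY, if_pos ⟨ha.trans (hω i), hXh.trans hb⟩]
  constructor <;> intro hy <;> linarith

end Combinatorics

lemma tendsto_card_filter_succ_div_le_atTop {h : ℕ → ℝ}
    (hnh : Tendsto (fun n : ℕ => (n : ℝ) * h n) atTop atTop) :
    Tendsto (fun n : ℕ =>
      ((Finset.univ.filter fun i : Fin n => ((i : ℕ) + 1 : ℝ) / n ≤ h n).card : ℝ))
      atTop atTop := by
  refine tendsto_natCast_atTop_atTop.comp (tendsto_atTop.mpr fun b => ?_)
  filter_upwards [hnh.eventually_ge_atTop (b : ℝ), eventually_ge_atTop b] with n hb hbn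
  calc b = (Finset.univ.map (Fin.castLEEmb hbn)).card := by simp
    _ ≤ _ := Finset.card_le_card fun i hi => by
      obtain ⟨j, -, rfl⟩ := Finset.mem_map.mp hi
      have hn : (0 : ℝ) < n := by exact_mod_cast j.pos.trans_le hbn
      have hj : ((j : ℕ) + 1 : ℝ) ≤ b := by exact_mod_cast j.isLt
      simp only [Finset.mem_filter, Finset.mem_univ, true_and, Fin.castLEEmb_apply,
        Fin.val_castLE]
      rw [div_le_iff₀ hn]
      linarith

lemma tendsto_natCast_mul_min_one_atTop {h : ℕ → ℝ}
    (hnh : Tendsto (fun n : ℕ => (n : ℝ) * h n) atTop atTop) :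
    Tendsto (fun n : ℕ => (n : ℝ) * min (h n) 1) atTop atTop := by
  simpa only [mul_min_of_nonneg _ _ (Nat.cast_nonneg _), mul_one] using
    tendsto_inf_atTop _ hnh tendsto_natCast_atTop_atTop

lemma tendsto_ofReal_div_atTop {α : Type*} {l : Filter α} (a : ℝ) {f : α → ℝ}
    (hf : Tendsto f l atTop) : Tendsto (fun x => ENNReal.ofReal (a / f x)) l (𝓝 0) := by
  simpa using ENNReal.tendsto_ofReal (tendsto_const_nhds.div_atTop hf)

variable [MeasurableSpace Ω] {P : Measure Ω}

noncomputable def meanDesignCount (P : Measure Ω) {n : ℕ} (X : Fin n → Ω → ℝ) (h : ℝ) : ℝ :=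
  ∑ i, P.real (X i ⁻¹' Iic h)

structure IsAdmissibleDesign (P : Measure Ω) {n : ℕ} (X : Fin n → Ω → ℝ) (h : ℝ) : Prop where
  measurable : ∀ i, Measurable (X i)
  ae_nonneg : ∀ᵐ ω ∂P, ∀ i, 0 ≤ X i ω
  integral_sq_designCount_sub_le :
    ∫ ω, (designCount X h ω - meanDesignCount P X h) ^ 2 ∂P ≤ meanDesignCount P X h

lemma measure_le_abs_le_integral_sq_div [IsFiniteMeasure P] {W : Ω → ℝ}
    (hW : Integrable (fun ω => W ω ^ 2) P) {a : ℝ} (ha : 0 < a) :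
    P {ω | a ≤ |W ω|} ≤ ENNReal.ofReal ((∫ ω, W ω ^ 2 ∂P) / a ^ 2) := by
  have hset : {ω | a ≤ |W ω|} = {ω | a ^ 2 ≤ W ω ^ 2} := by
    ext ω
    change a ≤ |W ω| ↔ a ^ 2 ≤ W ω ^ 2
    rw [← sq_abs (W ω)]
    exact (pow_le_pow_iff_left₀ ha.le (abs_nonneg _) two_ne_zero).symm
  have markov := mul_meas_ge_le_integral_of_nonneg
    (ae_of_all P fun ω => sq_nonneg (W ω)) hW (a ^ 2)
  rw [hset, ← ofReal_measureReal]
  refine ENNReal.ofReal_le_ofReal ?_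
  rw [le_div_iff₀ (by positivity)]
  linarith

lemma integral_sq_sum_of_orthogonal {ι : Type*} [Fintype ι] {C : ι → Ω → ℝ}
    (hC : ∀ i, MemLp (C i) 2 P) (horth : ∀ i j, i ≠ j → ∫ ω, C i ω * C j ω ∂P = 0) :
    ∫ ω, (∑ i, C i ω) ^ 2 ∂P = ∑ i, ∫ ω, C i ω ^ 2 ∂P := by
  have hint : ∀ i j, Integrable (fun ω => C i ω * C j ω) P :=
    fun i j => (hC i).integrable_mul (hC j)
  simp_rw [sq, Finset.sum_mul_sum]
  rw [integral_finsetSum _ fun i _ => integrable_finsetSum _ fun j _ => hint i j]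
  refine Finset.sum_congr rfl fun i _ => ?_
  rw [integral_finsetSum _ fun j _ => hint i j,
    Finset.sum_eq_single i (fun j _ hji => horth i j hji.symm) (by simp)]

lemma integral_indicator_one_comp [IsFiniteMeasure P] {f : Ω → ℝ} (hf : Measurable f)
    {s : Set ℝ} (hs : MeasurableSet s) : ∫ ω, s.indicator 1 (f ω) ∂P = P.real (f ⁻¹' s) := by
  simp_rw [← Set.indicator_comp_right]
  exact integral_indicator_one (hf hs)

lemma integrable_indicator_one_comp [IsFiniteMeasure P] {f : Ω → ℝ} (hf : Measurable f)
    {s : Set ℝ} (hs : MeasurableSet s) :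
    Integrable (fun ω => s.indicator (1 : ℝ → ℝ) (f ω)) P := by
  simp_rw [← Set.indicator_comp_right]
  exact (integrable_const 1).indicator (hf hs)

lemma memLp_indicator_one_comp_mul_sub [IsFiniteMeasure P] {f g : Ω → ℝ} (hf : Measurable f)
    (hg : Measurable g) {s t : Set ℝ} (hs : MeasurableSet s) (ht : MeasurableSet t) (p : ℝ) :
    MemLp (fun ω => s.indicator 1 (f ω) * (t.indicator 1 (g ω) - p)) 2 P := by
  refine MemLp.of_bound (by fun_prop) (1 + |p|) (ae_of_all _ fun ω => ?_)
  by_cases hfs : f ω ∈ s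
  · by_cases hgt : g ω ∈ t <;> simp [hfs, hgt]
    exact (abs_sub _ _).trans (by simp)
  · simp only [Set.indicator_of_notMem hfs, zero_mul, norm_zero]
    positivity

lemma measureReal_preimage_Iic_of_map_eq_uniform {f : Ω → ℝ} (hf : Measurable f)
    (hlaw : P.map f = volume.restrict (Icc 0 1)) {h : ℝ} (hh : 0 ≤ h) :
    P.real (f ⁻¹' Iic h) = min h 1 := by
  have hset : Iic h ∩ Icc 0 1 = Icc 0 (min h 1) := by
    ext x
    simp only [mem_inter_iff, mem_Iic, mem_Icc, le_min_iff]
    tauto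
  rw [← map_measureReal_apply hf measurableSet_Iic, hlaw,
    measureReal_restrict_apply measurableSet_Iic, hset,
    Real.volume_real_Icc_of_le (le_min hh zero_le_one), sub_zero]

section Probability

variable [IsProbabilityMeasure P] {n : ℕ} {X ξ : Fin n → Ω → ℝ}

lemma integral_indicator_one_comp_sub_eq_zero {f : Ω → ℝ} (hf : Measurable f) {t : Set ℝ}
    (ht : MeasurableSet t) {p : ℝ} (hp : P.real (f ⁻¹' t) = p) :
    ∫ ω, (t.indicator 1 (f ω) - p) ∂P = 0 := by
  rw [integral_sub _ (integrable_const p), integral_indicator_one_comp hf ht, hp]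
  · simp
  · exact integrable_indicator_one_comp hf ht

lemma integral_indicator_one_comp_sub_sq {f : Ω → ℝ} (hf : Measurable f) {t : Set ℝ}
    (ht : MeasurableSet t) {p : ℝ} (hp : P.real (f ⁻¹' t) = p) :
    ∫ ω, (t.indicator 1 (f ω) - p) ^ 2 ∂P = p * (1 - p) := by
  have hsq : ∀ x, (t.indicator 1 x - p) ^ 2 = (1 - 2 * p) * t.indicator 1 x + p ^ 2 := by
    intro x
    by_cases hx : x ∈ t
    · simp [hx]; ring
    · simp [hx]
  simp_rw [hsq]
  rw [integral_add _ (integrable_const _), integral_const_mul, integral_indicator_one_comp hf ht,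
    hp]
  · simp; ring
  · exact (integrable_indicator_one_comp hf ht).const_mul _

lemma integral_sq_sum_indicator_mul_centered {s t : Set ℝ} {p : ℝ}
    (hX : ∀ i, Measurable (X i)) (hξ : ∀ i, Measurable (ξ i)) (hξind : iIndepFun ξ P)
    (hXξ : NoiseIndepDesign P n X ξ)
    (hs : MeasurableSet s) (ht : MeasurableSet t) (hp : ∀ i, P.real (ξ i ⁻¹' t) = p) :
    ∫ ω, (∑ i, s.indicator 1 (X i ω) * (t.indicator 1 (ξ i ω) - p)) ^ 2 ∂P
      = p * (1 - p) * ∑ i, P.real (X i ⁻¹' s) := by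
  have hs₁ : Measurable (s.indicator (1 : ℝ → ℝ)) := measurable_const.indicator hs
  have ht₁ : Measurable (t.indicator (1 : ℝ → ℝ)) := measurable_const.indicator ht
  have hind : ∀ i : Fin n, Measurable fun x : Fin n → ℝ => s.indicator (1 : ℝ → ℝ) (x i) :=
    fun i => hs₁.comp (measurable_pi_apply i)
  have hcen₀ : Measurable fun x : ℝ => t.indicator (1 : ℝ → ℝ) x - p :=
    ht₁.sub measurable_const
  have hcen : ∀ i : Fin n, Measurable fun x : Fin n → ℝ => t.indicator (1 : ℝ → ℝ) (x i) - p :=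
    fun i => hcen₀.comp (measurable_pi_apply i)
  rw [integral_sq_sum_of_orthogonal, Finset.mul_sum]
  · refine Finset.sum_congr rfl fun i _ => ?_
    have hindep : IndepFun (fun ω => s.indicator 1 (X i ω))
        (fun ω => (t.indicator 1 (ξ i ω) - p) ^ 2) P :=
      hXξ.comp (hind i) ((hcen i).pow_const 2)
    have hidem : ∀ x, s.indicator (1 : ℝ → ℝ) x ^ 2 = s.indicator 1 x := fun x => by
      by_cases hx : x ∈ s <;> simp [hx]
    simp_rw [mul_pow, hidem]
    rw [hindep.integral_fun_mul_eq_mul_integral (hs₁.comp (hX i)).aestronglyMeasurable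
        ((hcen₀.comp (hξ i)).pow_const 2).aestronglyMeasurable,
      integral_indicator_one_comp (hX i) hs, integral_indicator_one_comp_sub_sq (hξ i) ht (hp i),
      mul_comm]
  · intro i
    exact memLp_indicator_one_comp_mul_sub (hX i) (hξ i) hs ht p
  · intro i j hij
    have hcross : IndepFun (fun ω => s.indicator 1 (X i ω) * s.indicator 1 (X j ω))
        (fun ω => (t.indicator 1 (ξ i ω) - p) * (t.indicator 1 (ξ j ω) - p)) P :=
      hXξ.comp ((hind i).fun_mul (hind j)) ((hcen i).fun_mul (hcen j))
    have hnoise : IndepFun (fun ω => t.indicator 1 (ξ i ω) - p)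
        (fun ω => t.indicator 1 (ξ j ω) - p) P :=
      (hξind.indepFun hij).comp hcen₀ hcen₀
    calc ∫ ω, s.indicator 1 (X i ω) * (t.indicator 1 (ξ i ω) - p)
          * (s.indicator 1 (X j ω) * (t.indicator 1 (ξ j ω) - p)) ∂P
        = ∫ ω, s.indicator 1 (X i ω) * s.indicator 1 (X j ω)
          * ((t.indicator 1 (ξ i ω) - p) * (t.indicator 1 (ξ j ω) - p)) ∂P := by
          congr 1 with ω; ring
      _ = 0 := by
          rw [hcross.integral_fun_mul_eq_mul_integral (by fun_prop) (by fun_prop),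
            hnoise.integral_fun_mul_eq_mul_integral (hcen₀.comp (hξ i)).aestronglyMeasurable
              (hcen₀.comp (hξ j)).aestronglyMeasurable,
            integral_indicator_one_comp_sub_eq_zero (hξ i) ht (hp i), zero_mul, mul_zero]

lemma integral_sq_sum_indicator_sub (hξ : ∀ i, Measurable (ξ i)) (hξind : iIndepFun ξ P)
    {t : Set ℝ} (ht : MeasurableSet t) {p : ℝ} (hp : ∀ i, P.real (ξ i ⁻¹' t) = p) :
    ∫ ω, (∑ i, (t.indicator 1 (ξ i ω) - p)) ^ 2 ∂P = n * (p * (1 - p)) := by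
  have hconst : NoiseIndepDesign P n (fun _ _ => 0) ξ := indepFun_const_left _ _
  simpa [mul_comm] using integral_sq_sum_indicator_mul_centered (fun _ => measurable_const) hξ
    hξind hconst MeasurableSet.univ ht hp

lemma memLp_designCount_sub (hX : ∀ i, Measurable (X i)) (h c : ℝ) :
    MemLp (fun ω => designCount X h ω - c) 2 P := by
  have hsum : MemLp (fun ω => ∑ i, (Iic h).indicator (1 : ℝ → ℝ) (X i ω)) 2 P :=
    memLp_finsetSum _ fun i _ => MemLp.of_bound
      ((measurable_const.indicator measurableSet_Iic).comp (hX i)).aestronglyMeasurable 1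
      (ae_of_all _ fun ω => by by_cases hx : X i ω ≤ h <;> simp [hx])
  simp_rw [designCount_eq_sum]
  exact hsum.sub (memLp_const c)

lemma integral_designCount (hX : ∀ i, Measurable (X i)) (h : ℝ) :
    ∫ ω, designCount X h ω ∂P = meanDesignCount P X h := by
  simp_rw [designCount_eq_sum]
  rw [integral_finsetSum _ fun i _ => integrable_indicator_one_comp (hX i) measurableSet_Iic]
  exact Finset.sum_congr rfl fun i _ => integral_indicator_one_comp (hX i) measurableSet_Iic

lemma measure_mul_designCount_le_abs_sub_le (hX : ∀ i, Measurable (X i))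
    (hξ : ∀ i, Measurable (ξ i)) (hξind : iIndepFun ξ P) (hXξ : NoiseIndepDesign P n X ξ)
    {h t p ε : ℝ} (hε : 0 < ε) (hp : ∀ i, P.real (ξ i ⁻¹' Iic t) = p)
    (hμ : 0 < meanDesignCount P X h)
    (hvar : ∫ ω, (designCount X h ω - meanDesignCount P X h) ^ 2 ∂P ≤ meanDesignCount P X h) :
    P {ω | ε * designCount X h ω
        ≤ |((Finset.univ.filter fun i => X i ω ≤ h ∧ ξ i ω ≤ t).card : ℝ)
            - p * designCount X h ω|}
      ≤ ENNReal.ofReal (4 / (ε ^ 2 * meanDesignCount P X h))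
        + ENNReal.ofReal (4 / meanDesignCount P X h) := by
  set μ := meanDesignCount P X h
  set N := designCount X h
  set W : Ω → ℝ := fun ω => ∑ i, (Iic h).indicator 1 (X i ω) * ((Iic t).indicator 1 (ξ i ω) - p)
  have hW : ∀ ω, ((Finset.univ.filter fun i => X i ω ≤ h ∧ ξ i ω ≤ t).card : ℝ) - p * N ω
      = W ω := by
    intro ω
    rw [natCast_card_filter_le_and_le, show N ω = _ from designCount_eq_sum X h ω, Finset.mul_sum,
      ← Finset.sum_sub_distrib]
    exact Finset.sum_congr rfl fun i _ => by ring
  have hWsq : ∫ ω, W ω ^ 2 ∂P ≤ μ := by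
    rw [integral_sq_sum_indicator_mul_centered hX hξ hξind hXξ measurableSet_Iic
      measurableSet_Iic hp]
    change p * (1 - p) * μ ≤ μ
    nlinarith [sq_nonneg (p - 1 / 2)]
  have hWint : Integrable (fun ω => W ω ^ 2) P :=
    (memLp_finsetSum _ fun i _ => memLp_indicator_one_comp_mul_sub (hX i) (hξ i)
      measurableSet_Iic measurableSet_Iic p).integrable_sq
  -- `ε N ≤ |W|` forces `W` or `N - μ` to be large on the scale of `μ`
  have hsplit : {ω | ε * N ω ≤ |((Finset.univ.filter fun i => X i ω ≤ h ∧ ξ i ω ≤ t).card : ℝ)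
        - p * N ω|} ⊆ {ω | ε * μ / 2 ≤ |W ω|} ∪ {ω | μ / 2 ≤ |N ω - μ|} := by
    intro ω hω
    simp only [Set.mem_ofPred_eq, hW, Set.mem_union] at hω ⊢
    by_contra! hsmall
    have hN : μ / 2 < N ω := by linarith [(abs_lt.mp hsmall.2).1]
    nlinarith [mul_lt_mul_of_pos_left hN hε, hsmall.1]
  calc _ ≤ P ({ω | ε * μ / 2 ≤ |W ω|} ∪ {ω | μ / 2 ≤ |N ω - μ|}) := measure_mono hsplit
    _ ≤ P {ω | ε * μ / 2 ≤ |W ω|} + P {ω | μ / 2 ≤ |N ω - μ|} := measure_union_le _ _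
    _ ≤ _ := by
      gcongr
      · refine (measure_le_abs_le_integral_sq_div hWint (by positivity)).trans
          (ENNReal.ofReal_le_ofReal ?_)
        calc (∫ ω, W ω ^ 2 ∂P) / (ε * μ / 2) ^ 2 ≤ μ / (ε * μ / 2) ^ 2 := by gcongr
          _ = 4 / (ε ^ 2 * μ) := by field_simp; ring
      · refine (measure_le_abs_le_integral_sq_div
          (memLp_designCount_sub hX h μ).integrable_sq (by positivity)).trans
          (ENNReal.ofReal_le_ofReal ?_)
        calc (∫ ω, (N ω - μ) ^ 2 ∂P) / (μ / 2) ^ 2 ≤ μ / (μ / 2) ^ 2 := by gcongr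
          _ = 4 / μ := by field_simp; ring

lemma measure_card_le_mul_designCount_le {h t p c : ℝ} (hd : IsAdmissibleDesign P X h)
    (hξ : ∀ i, Measurable (ξ i)) (hξind : iIndepFun ξ P) (hXξ : NoiseIndepDesign P n X ξ)
    (hp : ∀ i, P.real (ξ i ⁻¹' Iic t) = p) (hc : c < p) (hμ : 0 < meanDesignCount P X h) :
    P {ω | ((Finset.univ.filter fun i => X i ω ≤ h ∧ ξ i ω ≤ t).card : ℝ)
        ≤ c * designCount X h ω}
      ≤ ENNReal.ofReal (4 / ((p - c) ^ 2 * meanDesignCount P X h))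
        + ENNReal.ofReal (4 / meanDesignCount P X h) := by
  refine le_trans (measure_mono fun ω hω => ?_) (measure_mul_designCount_le_abs_sub_le
    hd.measurable hξ hξind hXξ (sub_pos.mpr hc) hp hμ hd.integral_sq_designCount_sub_le)
  simp only [Set.mem_ofPred_eq] at hω ⊢
  exact le_trans (by linarith) (neg_le_abs _)

lemma measure_mul_designCount_lt_card_le {h t p c : ℝ} (hd : IsAdmissibleDesign P X h)
    (hξ : ∀ i, Measurable (ξ i)) (hξind : iIndepFun ξ P) (hXξ : NoiseIndepDesign P n X ξ)
    (hp : ∀ i, P.real (ξ i ⁻¹' Iic t) = p) (hc : p < c) (hμ : 0 < meanDesignCount P X h) :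
    P {ω | c * designCount X h ω
        < ((Finset.univ.filter fun i => X i ω ≤ h ∧ ξ i ω ≤ t).card : ℝ)}
      ≤ ENNReal.ofReal (4 / ((c - p) ^ 2 * meanDesignCount P X h))
        + ENNReal.ofReal (4 / meanDesignCount P X h) := by
  refine le_trans (measure_mono fun ω hω => ?_) (measure_mul_designCount_le_abs_sub_le
    hd.measurable hξ hξind hXξ (sub_pos.mpr hc) hp hμ hd.integral_sq_designCount_sub_le)
  simp only [Set.mem_ofPred_eq] at hω ⊢
  exact le_trans (by linarith) (le_abs_self _)

lemma measure_not_card_obsY_le_le {h p c : ℝ} (hd : IsAdmissibleDesign P X h)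
    (hξ : ∀ i, Measurable (ξ i)) (hξind : iIndepFun ξ P) (hXξ : NoiseIndepDesign P n X ξ)
    (hp : ∀ i, P.real (ξ i ⁻¹' Iic (-1/2)) = p) (hc : p < c) (hμ : 0 < meanDesignCount P X h)
    {a b : ℝ} (ha : a ≤ 0) (hb : h ≤ b) :
    P {ω | ¬ (((Finset.univ.filter fun i => X i ω ≤ h ∧ obsY X ξ a b i ω ≤ 1/2).card : ℝ)
        ≤ c * designCount X h ω)}
      ≤ ENNReal.ofReal (4 / ((c - p) ^ 2 * meanDesignCount P X h))
        + ENNReal.ofReal (4 / meanDesignCount P X h) := by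
  refine le_trans (measure_mono_ae ?_) (measure_mul_designCount_lt_card_le hd hξ hξind hXξ hp hc hμ)
  filter_upwards [hd.ae_nonneg] with ω hω (hmem : ¬ (_ ≤ _))
  show c * designCount X h ω < _
  rwa [← filter_obsY_le_eq ha hb hω, ← not_le]

lemma meanDesignCount_of_const {x : Fin n → ℝ} (hX : ∀ i ω, X i ω = x i) (h : ℝ) :
    meanDesignCount P X h = ((Finset.univ.filter fun i => x i ≤ h).card : ℝ) := by
  rw [meanDesignCount, Finset.natCast_card_filter]
  refine Finset.sum_congr rfl fun i _ => ?_
  have hXi : X i = fun _ => x i := funext (hX i)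
  by_cases hx : x i ≤ h <;> simp [hXi, hx]

lemma IsDD.isAdmissibleDesign (hX : IsDD n X) (h : ℝ) : IsAdmissibleDesign P X h where
  measurable i := by rw [funext (hX i)]; exact measurable_const
  ae_nonneg := ae_of_all _ fun ω i => by rw [hX i ω]; positivity
  integral_sq_designCount_sub_le := by
    simp [designCount_of_const hX, meanDesignCount_of_const hX]

lemma IsRD.meanDesignCount_eq (hX : IsRD P n X) {h : ℝ} (hh : 0 ≤ h) :
    meanDesignCount P X h = n * min h 1 := by
  obtain ⟨hXm, -, U, hUm, -, hUlaw, hXU⟩ := hX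
  rw [← integral_designCount hXm,
    integral_congr_ae (ae_of_all _ fun ω => designCount_eq_of_perm (hXU ω)),
    integral_designCount hUm, meanDesignCount]
  simp [measureReal_preimage_Iic_of_map_eq_uniform (hUm _) (hUlaw _) hh]

lemma IsRD.isAdmissibleDesign (hX : IsRD P n X) {h : ℝ} (hh : 0 ≤ h) :
    IsAdmissibleDesign P X h := by
  have hμ := hX.meanDesignCount_eq hh
  obtain ⟨hXm, -, U, hUm, hUind, hUlaw, hXU⟩ := hX
  have hU : ∀ᵐ ω ∂P, ∀ j, 0 ≤ U j ω := ae_all_iff.mpr fun j =>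
    ae_of_ae_map (hUm j).aemeasurable <| by
      rw [hUlaw j]
      exact (ae_restrict_mem measurableSet_Icc).mono fun x hx => hx.1
  refine ⟨hXm, ?_, ?_⟩
  · filter_upwards [hU] with ω hω i
    obtain ⟨σ, hσ⟩ := hXU ω
    exact hσ i ▸ hω (σ i)
  · have hdev : ∀ ω, designCount X h ω - meanDesignCount P X h
        = ∑ j, ((Iic h).indicator 1 (U j ω) - min h 1) := fun ω => by
      rw [designCount_eq_of_perm (hXU ω), designCount_eq_sum, hμ, Finset.sum_sub_distrib]
      simp
    simp_rw [hdev]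
    rw [integral_sq_sum_indicator_sub hUm hUind measurableSet_Iic
      fun j => measureReal_preimage_Iic_of_map_eq_uniform (hUm j) (hUlaw j) hh, hμ]
    have hq : 0 ≤ min h 1 := le_min hh zero_le_one
    exact mul_le_mul_of_nonneg_left (by nlinarith) n.cast_nonneg

end Probability

end

theorem stmt0_general
    -- common law of the noise
    (ν : Measure ℝ)
    -- the calibrating constant c
    (c : ℝ)
    (hc1 : (ν (Set.Iic (-(1:ℝ)/2))).toReal < c)
    (hc2 : c < (ν (Set.Iic ((1:ℝ)/2))).toReal)
    -- the detection threshold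
    (h : ℕ → ℝ) (hh : ∀ n, 0 < h n)
    (hnh : Tendsto (fun n : ℕ => (n : ℝ) * h n) atTop atTop)
    -- the model, for each sample size n
    (Ω : ℕ → Type) (mΩ : ∀ n, MeasurableSpace (Ω n))
    (P : ∀ n, Measure (Ω n)) (hP : ∀ n, IsProbabilityMeasure (P n))
    (X ξ : ∀ n, Fin n → Ω n → ℝ)
    (hξmeas : ∀ n i, Measurable (ξ n i))
    (hξindep : ∀ n, iIndepFun (ξ n) (P n))
    (hξlaw : ∀ n i, Measure.map (ξ n i) (P n) = ν)
    (hdesign : (∀ n, IsDD n (X n)) ∨ (∀ n, IsRD (P n) n (X n)))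
    (hindep : ∀ n, NoiseIndepDesign (P n) n (X n) (ξ n)) :
    Tendsto (fun n : ℕ =>
      -- type I error: under G = ∅ (so Yᵢ = ξᵢ), the test accepts H₁, i.e. S ≤ cN
      (P n) {ω | ((Finset.univ.filter fun i : Fin n =>
              X n i ω ≤ h n ∧ ξ n i ω ≤ 1/2).card : ℝ)
            ≤ c * ((Finset.univ.filter fun i : Fin n => X n i ω ≤ h n).card : ℝ)}
      -- type II error: sup over G = [0,θ] ∈ S₀ with |G| ≥ h n
      + ⨆ (θ : ℝ) (_ : θ ∈ Set.Icc (0:ℝ) 1 ∧ h n ≤ θ),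
        (P n) {ω | ¬ (((Finset.univ.filter fun i : Fin n =>
              X n i ω ≤ h n ∧ obsY (X n) (ξ n) 0 θ i ω ≤ 1/2).card : ℝ)
            ≤ c * ((Finset.univ.filter fun i : Fin n => X n i ω ≤ h n).card : ℝ))})
      atTop (𝓝 0) := by
  have hlaw : ∀ n i t, (P n).real (ξ n i ⁻¹' Iic t) = (ν (Iic t)).toReal := fun n i t => by
    rw [← map_measureReal_apply (hξmeas n i) measurableSet_Iic, hξlaw n i]
    rfl
  obtain ⟨hadm, hμ⟩ : (∀ n, IsAdmissibleDesign (P n) (X n) (h n)) ∧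
      Tendsto (fun n => meanDesignCount (P n) (X n) (h n)) atTop atTop := by
    rcases hdesign with hdd | hrd
    · refine ⟨fun n => (hdd n).isAdmissibleDesign (h n), ?_⟩
      simpa only [meanDesignCount_of_const (hdd _)] using
        tendsto_card_filter_succ_div_le_atTop hnh
    · refine ⟨fun n => (hrd n).isAdmissibleDesign (hh n).le, ?_⟩
      simpa only [(hrd _).meanDesignCount_eq (hh _).le] using
        tendsto_natCast_mul_min_one_atTop hnh
  have hbound := ((tendsto_ofReal_div_atTop 4
    (hμ.const_mul_atTop (pow_pos (sub_pos.mpr hc2) 2))).add (tendsto_ofReal_div_atTop 4 hμ)).add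
    ((tendsto_ofReal_div_atTop 4
    (hμ.const_mul_atTop (pow_pos (sub_pos.mpr hc1) 2))).add (tendsto_ofReal_div_atTop 4 hμ))
  simp only [add_zero] at hbound
  refine tendsto_of_tendsto_of_tendsto_of_le_of_le' tendsto_const_nhds hbound
    (.of_forall fun _ => zero_le) ?_
  filter_upwards [hμ.eventually_gt_atTop 0] with n hμn
  exact add_le_add
    (measure_card_le_mul_designCount_le (hadm n) (hξmeas n) (hξindep n) (hindep n)
      (fun i => hlaw n i _) hc2 hμn)
    (iSup₂_le fun θ hθ => measure_not_card_obsY_le_le (hadm n) (hξmeas n) (hξindep n) (hindep n)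
      (fun i => hlaw n i _) hc1 hμn le_rfl hθ.2)

/-- consistency of the test `T_n^0 = 1(S ≤ cN)` on the class `S₀`,
when `n·h_n → ∞`, for designs (DD) or (RD). -/
theorem stmt0
    (σ : ℝ) (hσ : 0 < σ)
    -- common law of the noise
    (ν : Measure ℝ) (hνprob : IsProbabilityMeasure ν)
    (hsub : ∀ u : ℝ, ∫ x, Real.exp (u * x) ∂ν ≤ Real.exp (σ^2 * u^2 / 2))
    (hν : ν (Set.Iic (-(1:ℝ)/2)) < ν (Set.Iic ((1:ℝ)/2)))
    -- the calibrating constant c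
    (c : ℝ)
    (hc1 : (ν (Set.Iic (-(1:ℝ)/2))).toReal < c)
    (hc2 : c < (ν (Set.Iic ((1:ℝ)/2))).toReal)
    -- the detection threshold
    (h : ℕ → ℝ) (hh : ∀ n, 0 < h n)
    (hnh : Tendsto (fun n : ℕ => (n : ℝ) * h n) atTop atTop)
    -- the model, for each sample size n
    (Ω : ℕ → Type) (mΩ : ∀ n, MeasurableSpace (Ω n))
    (P : ∀ n, Measure (Ω n)) (hP : ∀ n, IsProbabilityMeasure (P n))
    (X ξ : ∀ n, Fin n → Ω n → ℝ)
    (hξmeas : ∀ n i, Measurable (ξ n i))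
    (hξindep : ∀ n, iIndepFun (ξ n) (P n))
    (hξlaw : ∀ n i, Measure.map (ξ n i) (P n) = ν)
    (hdesign : (∀ n, IsDD n (X n)) ∨ (∀ n, IsRD (P n) n (X n)))
    (hindep : ∀ n, NoiseIndepDesign (P n) n (X n) (ξ n)) :
    Tendsto (fun n : ℕ =>
      -- type I error: under G = ∅ (so Yᵢ = ξᵢ), the test accepts H₁, i.e. S ≤ cN
      (P n) {ω | ((Finset.univ.filter fun i : Fin n =>
              X n i ω ≤ h n ∧ ξ n i ω ≤ 1/2).card : ℝ)
            ≤ c * ((Finset.univ.filter fun i : Fin n => X n i ω ≤ h n).card : ℝ)}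
      -- type II error: sup over G = [0,θ] ∈ S₀ with |G| ≥ h n
      + ⨆ (θ : ℝ) (_ : θ ∈ Set.Icc (0:ℝ) 1 ∧ h n ≤ θ),
        (P n) {ω | ¬ (((Finset.univ.filter fun i : Fin n =>
              X n i ω ≤ h n ∧ obsY (X n) (ξ n) 0 θ i ω ≤ 1/2).card : ℝ)
            ≤ c * ((Finset.univ.filter fun i : Fin n => X n i ω ≤ h n).card : ℝ))})
      atTop (𝓝 0) :=
  stmt0_general ν c hc1 hc2 h hh hnh Ω mΩ P hP X ξ hξmeas hξindep hξlaw hdesign hindep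
end

section
/- Consider the model with design (DD) or (RD) and i.i.d. Gaussian noise ξ_i ~ N(0, σ²). If n·h → 0 as n → ∞, then no test is consistent on the class S_0: for every sequence of tests τ_n ∈ {0,1} (measurable functions of the observations), liminf_{n→∞} γ_n(τ_n, S_0) ≥ 1/2; in particular γ_n(τ_n, S_0) does not converge to 0. Consequently, 1/n is a separation rate for detection on S_0 under Gaussian noise. -/
open MeasureTheory ProbabilityTheory Set Filter Real
open scoped ENNReal NNReal Topology symmDiff

/-! If `n h → 0`, then for large `n` the segment `G = [0, h]` contains no design point with
probability at least `1/2`: surely under (DD), and by a union bound over the `n` uniform points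
under (RD). On that event the observations under `G` and under `∅` coincide, so any test errs
under one of the two hypotheses, and the sum of its errors is at least `1/2`. -/

theorem half_le_measure_of_measure_compl_le {Ω : Type*} [MeasurableSpace Ω] {μ : Measure Ω}
    [IsProbabilityMeasure μ] {E : Set Ω} (hE : μ Eᶜ ≤ 1 / 2) : 1 / 2 ≤ μ E := by
  have hone : 1 ≤ μ E + 1 / 2 := by
    simpa using (measure_univ_le_add_compl (μ := μ) E).trans (add_le_add le_rfl hE)
  rw [← ENNReal.sub_half ENNReal.one_ne_top]
  exact tsub_le_iff_right.2 hone

section Design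

variable {Ω : Type*} {n : ℕ} {X : Fin n → Ω → ℝ}

theorem IsDD.lt_apply {t : ℝ} (hX : IsDD n X) (hnt : n * t < 1) (i : Fin n) (ω : Ω) :
    t < X i ω := by
  have hn : (0 : ℝ) < n := by exact_mod_cast i.pos
  rw [hX i ω, lt_div_iff₀ hn]
  have hi : (0 : ℝ) ≤ (i : ℕ) := Nat.cast_nonneg _
  linarith

theorem IsRD.measure_exists_mem_le [MeasurableSpace Ω] {P : Measure Ω} (hX : IsRD P n X)
    {S : Set ℝ} (hS : MeasurableSet S) :
    P {ω | ∃ i, X i ω ∈ S} ≤ n * volume S := by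
  obtain ⟨-, -, U, hUm, -, hUlaw, hperm⟩ := hX
  have hcover : {ω | ∃ i, X i ω ∈ S} ⊆ ⋃ i, U i ⁻¹' S := by
    rintro ω ⟨i, hi⟩
    obtain ⟨p, hp⟩ := hperm ω
    exact mem_iUnion.2 ⟨p i, by simpa [hp i] using hi⟩
  have hlaw (i : Fin n) : P (U i ⁻¹' S) ≤ volume S := by
    rw [← Measure.map_apply (hUm i) hS, hUlaw i, Measure.restrict_apply hS]
    exact measure_mono inter_subset_left
  calc P {ω | ∃ i, X i ω ∈ S}
      ≤ ∑ i, P (U i ⁻¹' S) := (measure_mono hcover).trans (measure_iUnion_fintype_le _ _)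
    _ ≤ ∑ _i : Fin n, volume S := Finset.sum_le_sum fun i _ => hlaw i
    _ = n * volume S := by simp

theorem half_le_measure_forall_notMem_Icc [MeasurableSpace Ω] {P : Measure Ω}
    [IsProbabilityMeasure P] (hX : IsDD n X ∨ IsRD P n X) {t : ℝ}
    (hnt : n * t ≤ 1 / 2) : 1 / 2 ≤ P {ω | ∀ i, X i ω ∉ Icc 0 t} := by
  rcases hX with hDD | hRD
  · have huniv : {ω | ∀ i, X i ω ∉ Icc 0 t} = univ :=
      eq_univ_of_forall fun ω i hi => (hDD.lt_apply (by linarith) i ω).not_ge hi.2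
    rw [huniv, measure_univ]
    exact ENNReal.half_le_self
  · refine half_le_measure_of_measure_compl_le ?_
    have hcompl : {ω | ∀ i, X i ω ∉ Icc 0 t}ᶜ = {ω | ∃ i, X i ω ∈ Icc 0 t} := by
      ext; simp
    calc P {ω | ∀ i, X i ω ∉ Icc 0 t}ᶜ ≤ n * volume (Icc 0 t) := by
          rw [hcompl]; exact hRD.measure_exists_mem_le measurableSet_Icc
      _ = ENNReal.ofReal (n * t) := by
          rw [Real.volume_Icc, sub_zero, ENNReal.ofReal_mul (Nat.cast_nonneg n),
            ENNReal.ofReal_natCast]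
      _ ≤ ENNReal.ofReal (1 / 2) := ENNReal.ofReal_le_ofReal hnt
      _ = 1 / 2 := by rw [one_div, ENNReal.ofReal_inv_of_pos two_pos]; simp

end Design

theorem measure_le_add_of_eqOn {Ω α : Type*} [MeasurableSpace Ω] (μ : Measure Ω)
    (τ : α → Bool) {f g : Ω → α} {E : Set Ω} (hfg : EqOn f g E) :
    μ E ≤ μ {ω | τ (f ω) = true} + μ {ω | τ (g ω) = false} := by
  have hcover : E ⊆ {ω | τ (f ω) = true} ∪ {ω | τ (g ω) = false} := by
    intro ω hω
    cases hτ : τ (f ω)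
    · exact Or.inr (by simpa [hfg hω] using hτ)
    · exact Or.inl hτ
  exact (measure_mono hcover).trans (measure_union_le _ _)

theorem stmt1_general
    (h : ℕ → ℝ) (hh : ∀ n, 0 < h n)
    (hnh : Tendsto (fun n : ℕ => (n : ℝ) * h n) atTop (𝓝 0))
    (Ω : ℕ → Type) (mΩ : ∀ n, MeasurableSpace (Ω n))
    (P : ∀ n, Measure (Ω n)) (hP : ∀ n, IsProbabilityMeasure (P n))
    (X ξ : ∀ n, Fin n → Ω n → ℝ)
    (hdesign : (∀ n, IsDD n (X n)) ∨ (∀ n, IsRD (P n) n (X n)))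
    -- an arbitrary sequence of tests, as measurable functions of the observations
    (τ : ∀ n, (Fin n → ℝ × ℝ) → Bool) :
    (1:ℝ≥0∞)/2 ≤
      Filter.liminf (fun n : ℕ =>
        -- type I error: under G = ∅ the observations are (Xᵢ, ξᵢ)
        (P n) {ω | τ n (fun i => (X n i ω, ξ n i ω)) = true}
        -- type II error: sup over G = [0,θ] ∈ S₀ with |G| ≥ h n
        + ⨆ (θ : ℝ) (_ : θ ∈ Set.Icc (0:ℝ) 1 ∧ h n ≤ θ),
          (P n) {ω | τ n (fun i => (X n i ω, obsY (X n) (ξ n) 0 θ i ω)) = false})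
        atTop := by
  refine le_liminf_of_le (by isBoundedDefault) ?_
  have hsmall : ∀ᶠ n : ℕ in atTop, (n : ℝ) * h n ≤ 1 / 2 :=
    hnh.eventually (eventually_le_nhds (by norm_num))
  filter_upwards [hsmall, eventually_ge_atTop 1] with n hn hn1
  have hθ : h n ∈ Icc (0 : ℝ) 1 ∧ h n ≤ h n := by
    have : h n ≤ n * h n := le_mul_of_one_le_left (hh n).le (by exact_mod_cast hn1)
    exact ⟨⟨(hh n).le, by linarith⟩, le_rfl⟩
  calc (1 : ℝ≥0∞) / 2 ≤ P n {ω | ∀ i, X n i ω ∉ Icc 0 (h n)} :=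
        half_le_measure_forall_notMem_Icc (hdesign.imp (· n) (· n)) hn
    _ ≤ P n {ω | τ n (fun i => (X n i ω, ξ n i ω)) = true}
          + P n {ω | τ n (fun i => (X n i ω, obsY (X n) (ξ n) 0 (h n) i ω)) = false} :=
        measure_le_add_of_eqOn _ (τ n) fun ω hω => funext fun i => by simp [obsY, hω i]
    _ ≤ _ := add_le_add le_rfl (le_iSup₂_of_le (h n) hθ le_rfl)

/-- if `n·h_n → 0`, no test is consistent on `S₀` under Gaussian
noise: every sequence of tests has `liminf γ_n ≥ 1/2`. -/
theorem stmt1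
    (σ : ℝ) (hσ : 0 < σ)
    (h : ℕ → ℝ) (hh : ∀ n, 0 < h n)
    (hnh : Tendsto (fun n : ℕ => (n : ℝ) * h n) atTop (𝓝 0))
    (Ω : ℕ → Type) (mΩ : ∀ n, MeasurableSpace (Ω n))
    (P : ∀ n, Measure (Ω n)) (hP : ∀ n, IsProbabilityMeasure (P n))
    (X ξ : ∀ n, Fin n → Ω n → ℝ)
    (hnoise : ∀ n, IsIidGaussian (P n) n (ξ n) σ)
    (hdesign : (∀ n, IsDD n (X n)) ∨ (∀ n, IsRD (P n) n (X n)))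
    (hindep : ∀ n, NoiseIndepDesign (P n) n (X n) (ξ n))
    -- an arbitrary sequence of tests, as measurable functions of the observations
    (τ : ∀ n, (Fin n → ℝ × ℝ) → Bool)
    (hτ : ∀ n, Measurable (τ n)) :
    (1:ℝ≥0∞)/2 ≤
      Filter.liminf (fun n : ℕ =>
        -- type I error: under G = ∅ the observations are (Xᵢ, ξᵢ)
        (P n) {ω | τ n (fun i => (X n i ω, ξ n i ω)) = true}
        -- type II error: sup over G = [0,θ] ∈ S₀ with |G| ≥ h n
        + ⨆ (θ : ℝ) (_ : θ ∈ Set.Icc (0:ℝ) 1 ∧ h n ≤ θ),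
          (P n) {ω | τ n (fun i => (X n i ω, obsY (X n) (ξ n) 0 θ i ω)) = false})
        atTop :=
  stmt1_general h hh hnh Ω mΩ P hP X ξ hdesign τ
end

section
/- Consider the model with design (DD) or (RD). Then for every integer n ≥ 1, the minimax risk on the class S_0 satisfies R_n(S_0) = inf_{Ĝ_n} sup_{G ∈ S_0} E_G[ |Ĝ_n Δ G| ] ≥ 1/(8n), where the infimum is over all estimators Ĝ_n (measurable maps from the observations to segments of [0,1]). -/
/-!
Le Cam's two-point argument, here without any noise computation. Compare the segments `[0, 0]`
and `[0, t]` with `t = 1 / (2n)`. On the event that no design point lies in `[0, t]` the two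
samples coincide, so the estimator returns the same segment under both hypotheses, and by the
triangle inequality for `|· Δ ·|` its two losses add up to at least `t`. Under (DD) this event is
certain; under (RD) a union bound gives it probability at least `1 - n t = 1/2`. Hence the two
risks add up to at least `t / 2`, and the larger one is at least `t / 4 = 1 / (8n)`.
-/

open MeasureTheory ProbabilityTheory Set Filter Real
open scoped ENNReal NNReal Topology symmDiff

lemma volume_symmDiff_Icc_ne_top (a b c d : ℝ) : volume (Icc a b ∆ Icc c d) ≠ ⊤ :=
  ne_top_of_le_ne_top (ENNReal.add_ne_top.2 ⟨measure_Icc_lt_top.ne, measure_Icc_lt_top.ne⟩)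
    ((measure_mono symmDiff_subset_union).trans (measure_union_le _ _))

lemma volume_symmDiff_Icc (a b c d : ℝ) :
    volume (Icc a b ∆ Icc c d) =
      (ENNReal.ofReal (b - a) - ENNReal.ofReal (min b d - max a c)) +
      (ENNReal.ofReal (d - c) - ENNReal.ofReal (min b d - max a c)) := by
  have hinter : volume (Icc a b ∩ Icc c d) ≠ ⊤ :=
    ne_top_of_le_ne_top measure_Icc_lt_top.ne (measure_mono inter_subset_left)
  have hm : NullMeasurableSet (Icc a b ∩ Icc c d) :=
    (measurableSet_Icc.inter measurableSet_Icc).nullMeasurableSet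
  rw [measure_symmDiff_eq measurableSet_Icc.nullMeasurableSet measurableSet_Icc.nullMeasurableSet,
    ← sdiff_self_inter (s := Icc a b) (t := Icc c d),
    ← sdiff_inter_self_eq_sdiff (s := Icc c d) (t := Icc a b),
    measure_sdiff inter_subset_left hm hinter, measure_sdiff inter_subset_right hm hinter,
    Icc_inter_Icc, Real.volume_Icc, Real.volume_Icc, Real.volume_Icc]

lemma measurable_sd (c d : ℝ) : Measurable fun p : ℝ × ℝ => sd p.1 p.2 c d := by
  simp only [sd, volume_symmDiff_Icc]
  have hinter : Measurable fun p : ℝ × ℝ => ENNReal.ofReal (min p.2 d - max p.1 c) :=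
    ((measurable_snd.min measurable_const).sub (measurable_fst.max measurable_const)).ennreal_ofReal
  exact (((measurable_snd.sub measurable_fst).ennreal_ofReal.sub hinter).add
    (measurable_const.sub hinter)).ennreal_toReal

lemma sd_nonneg (a b c d : ℝ) : 0 ≤ sd a b c d := ENNReal.toReal_nonneg

lemma sd_comm (a b c d : ℝ) : sd a b c d = sd c d a b := by
  rw [sd, sd, symmDiff_comm]

lemma sd_triangle (a b c d e f : ℝ) : sd a b e f ≤ sd a b c d + sd c d e f := by
  rw [sd, sd, sd, ← ENNReal.toReal_add (volume_symmDiff_Icc_ne_top _ _ _ _)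
    (volume_symmDiff_Icc_ne_top _ _ _ _)]
  exact ENNReal.toReal_mono
    (ENNReal.add_ne_top.2 ⟨volume_symmDiff_Icc_ne_top _ _ _ _, volume_symmDiff_Icc_ne_top _ _ _ _⟩)
    (measure_symmDiff_le _ _ _)

lemma sd_self_left {a b : ℝ} (hab : a ≤ b) : sd a a a b = b - a := by
  rw [sd, symmDiff_of_le (Icc_subset_Icc le_rfl hab), measure_sdiff_null (by simp),
    Real.volume_Icc, ENNReal.toReal_ofReal (sub_nonneg.2 hab)]

lemma le_sd_add_sd {t : ℝ} (ht : 0 ≤ t) (a b : ℝ) : t ≤ sd a b 0 0 + sd a b 0 t := by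
  simpa [sd_self_left ht, sd_comm a b 0 0] using sd_triangle 0 0 a b 0 t

section Risk

variable {Ω : Type*} {n : ℕ}

noncomputable def sample (X ξ : Fin n → Ω → ℝ) (θ : ℝ) (ω : Ω) : Fin n → ℝ × ℝ :=
  fun i => (X i ω, obsY X ξ 0 θ i ω)

noncomputable def risk [MeasurableSpace Ω] (P : Measure Ω) (X ξ : Fin n → Ω → ℝ)
    (Ghat : (Fin n → ℝ × ℝ) → ℝ × ℝ) (θ : ℝ) : ℝ≥0∞ :=
  ∫⁻ ω, ENNReal.ofReal (sd (Ghat (sample X ξ θ ω)).1 (Ghat (sample X ξ θ ω)).2 0 θ) ∂P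

variable {X ξ : Fin n → Ω → ℝ}

lemma sample_zero_eq_of_forall_notMem_Icc {t : ℝ} (ht : 0 ≤ t) {ω : Ω}
    (hω : ∀ i, X i ω ∉ Icc 0 t) : sample X ξ 0 ω = sample X ξ t ω := by
  funext i
  have hω0 : X i ω ∉ Icc 0 0 := fun h => hω i (Icc_subset_Icc le_rfl ht h)
  simp only [sample, obsY, if_neg (hω i), if_neg hω0]

variable [MeasurableSpace Ω]

lemma measurable_sample (hX : ∀ i, Measurable (X i)) (hξ : ∀ i, Measurable (ξ i)) (θ : ℝ) :
    Measurable (sample X ξ θ) :=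
  measurable_pi_lambda _ fun i => (hX i).prodMk
    ((Measurable.ite ((hX i) measurableSet_Icc) measurable_const measurable_const).add (hξ i))

lemma ofReal_mul_measure_le_risk_add_risk (P : Measure Ω) (hX : ∀ i, Measurable (X i))
    (hξ : ∀ i, Measurable (ξ i)) {Ghat : (Fin n → ℝ × ℝ) → ℝ × ℝ} (hGhat : Measurable Ghat)
    {t : ℝ} (ht : 0 ≤ t) :
    ENNReal.ofReal t * P {ω | ∀ i, X i ω ∉ Icc 0 t} ≤
      risk P X ξ Ghat 0 + risk P X ξ Ghat t := by
  set loss : ℝ → Ω → ℝ≥0∞ := fun θ ω =>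
    ENNReal.ofReal (sd (Ghat (sample X ξ θ ω)).1 (Ghat (sample X ξ θ ω)).2 0 θ)
  have hloss : ∀ θ, Measurable (loss θ) := fun θ =>
    ((measurable_sd 0 θ).comp (hGhat.comp (measurable_sample hX hξ θ))).ennreal_ofReal
  have hpoint : ∀ ω ∈ {ω | ∀ i, X i ω ∉ Icc 0 t}, ENNReal.ofReal t ≤ loss 0 ω + loss t ω := by
    intro ω hω
    simp only [loss, sample_zero_eq_of_forall_notMem_Icc ht hω]
    rw [← ENNReal.ofReal_add (sd_nonneg _ _ _ _) (sd_nonneg _ _ _ _)]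
    exact ENNReal.ofReal_le_ofReal (le_sd_add_sd ht _ _)
  calc ENNReal.ofReal t * P {ω | ∀ i, X i ω ∉ Icc 0 t}
      = ∫⁻ _ in {ω | ∀ i, X i ω ∉ Icc 0 t}, ENNReal.ofReal t ∂P := (setLIntegral_const _ _).symm
    _ ≤ ∫⁻ ω in {ω | ∀ i, X i ω ∉ Icc 0 t}, (loss 0 ω + loss t ω) ∂P :=
        setLIntegral_mono ((hloss 0).add (hloss t)) hpoint
    _ ≤ ∫⁻ ω, (loss 0 ω + loss t ω) ∂P := setLIntegral_le_lintegral _ _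
    _ = risk P X ξ Ghat 0 + risk P X ξ Ghat t := lintegral_add_left (hloss 0) _

lemma ofReal_half_mul_measure_le_iSup_risk (P : Measure Ω) (hX : ∀ i, Measurable (X i))
    (hξ : ∀ i, Measurable (ξ i)) {Ghat : (Fin n → ℝ × ℝ) → ℝ × ℝ} (hGhat : Measurable Ghat)
    {t : ℝ} (ht : t ∈ Icc (0 : ℝ) 1) :
    ENNReal.ofReal (t / 2) * P {ω | ∀ i, X i ω ∉ Icc 0 t} ≤
      ⨆ θ ∈ Icc (0 : ℝ) 1, risk P X ξ Ghat θ := by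
  have hmax : max (risk P X ξ Ghat 0) (risk P X ξ Ghat t) ≤
      ⨆ θ ∈ Icc (0 : ℝ) 1, risk P X ξ Ghat θ :=
    max_le (le_biSup _ (left_mem_Icc.2 zero_le_one)) (le_biSup _ ht)
  have htwo : 2 * ENNReal.ofReal (t / 2) = ENNReal.ofReal t := by
    rw [← ENNReal.ofReal_ofNat 2, ← ENNReal.ofReal_mul zero_le_two, mul_div_cancel₀ _ two_ne_zero]
  refine le_trans ?_ hmax
  rw [← ENNReal.mul_le_mul_iff_right two_ne_zero ENNReal.ofNat_ne_top, ← mul_assoc, htwo, two_mul]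
  exact (ofReal_mul_measure_le_risk_add_risk P hX hξ hGhat ht.1).trans
    (add_le_add (le_max_left _ _) (le_max_right _ _))

end Risk

section Design

variable {Ω : Type*} {n : ℕ} {X : Fin n → Ω → ℝ}

lemma measurable_of_isDD [MeasurableSpace Ω] (hX : IsDD n X) (i : Fin n) : Measurable (X i) := by
  rw [show X i = fun _ => ((i : ℕ) + 1 : ℝ) / n from funext (hX i)]
  exact measurable_const

lemma notMem_Icc_of_isDD (hX : IsDD n X) {t : ℝ} (ht : t < 1 / n) (i : Fin n) (ω : Ω) :
    X i ω ∉ Icc 0 t := fun hmem => by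
  have hle : (1 : ℝ) / n ≤ ((i : ℕ) + 1) / n :=
    div_le_div_of_nonneg_right (by linarith [(i : ℕ).cast_nonneg (α := ℝ)]) n.cast_nonneg
  rw [hX i ω] at hmem
  linarith [hmem.2]

lemma one_sub_le_measure_forall_notMem_Icc_of_isRD [MeasurableSpace Ω] {P : Measure Ω}
    [IsProbabilityMeasure P] (hX : IsRD P n X) (t : ℝ) :
    1 - n * ENNReal.ofReal t ≤ P {ω | ∀ i, X i ω ∉ Icc 0 t} := by
  obtain ⟨-, -, U, hU, -, hUlaw, hXU⟩ := hX
  have hset : {ω | ∀ i, X i ω ∉ Icc 0 t} = (⋃ j, U j ⁻¹' Icc 0 t)ᶜ := by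
    ext ω
    obtain ⟨p, hp⟩ := hXU ω
    simp only [mem_ofPred_eq, mem_compl_iff, mem_iUnion, mem_preimage, not_exists, hp]
    exact p.forall_congr_right (q := fun j => U j ω ∉ Icc 0 t)
  rw [hset, prob_compl_eq_one_sub (MeasurableSet.iUnion fun j => hU j measurableSet_Icc)]
  gcongr
  calc P (⋃ j, U j ⁻¹' Icc 0 t)
      ≤ ∑ j, P (U j ⁻¹' Icc 0 t) := measure_iUnion_fintype_le _ _
    _ ≤ ∑ _ : Fin n, ENNReal.ofReal t := Finset.sum_le_sum fun j _ => by
        rw [← Measure.map_apply (hU j) measurableSet_Icc, hUlaw j]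
        exact (Measure.restrict_apply_le _ _).trans (by rw [Real.volume_Icc, sub_zero])
    _ = n * ENNReal.ofReal t := by simp

end Design

theorem stmt8_general
    (σ : ℝ)
    (Ω : Type*) [MeasurableSpace Ω] (P : Measure Ω) [IsProbabilityMeasure P]
    (n : ℕ) (hn : 1 ≤ n)
    (X ξ : Fin n → Ω → ℝ)
    (hdesign : IsDD n X ∨ IsRD P n X)
    (hnoise : IsIidSubgaussian P n ξ σ)
    (Ghat : (Fin n → ℝ × ℝ) → ℝ × ℝ)
    (hmeas : Measurable Ghat) :
    ENNReal.ofReal (1 / (8 * n)) ≤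
      ⨆ (θ : ℝ) (_ : θ ∈ Set.Icc (0:ℝ) 1),
        ∫⁻ ω, ENNReal.ofReal
          (sd (Ghat (fun i => (X i ω, obsY X ξ 0 θ i ω))).1
              (Ghat (fun i => (X i ω, obsY X ξ 0 θ i ω))).2 0 θ) ∂P := by
  set t : ℝ := 1 / (2 * n) with ht
  have hn1 : (1 : ℝ) ≤ n := by exact_mod_cast hn
  have ht01 : t ∈ Icc (0 : ℝ) 1 :=
    ⟨by positivity, by rw [ht, div_le_one (by positivity)]; linarith⟩
  have hX : ∀ i, Measurable (X i) := hdesign.elim measurable_of_isDD fun hRD => hRD.1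
  have hfree : 2⁻¹ ≤ P {ω | ∀ i, X i ω ∉ Icc 0 t} := by
    rcases hdesign with hDD | hRD
    · have htn : t < 1 / n := one_div_lt_one_div_of_lt (by linarith) (by linarith)
      have huniv : {ω | ∀ i, X i ω ∉ Icc 0 t} = univ :=
        eq_univ_of_forall fun ω i => notMem_Icc_of_isDD hDD htn i ω
      rw [huniv, measure_univ]
      exact ENNReal.inv_le_one.2 one_le_two
    · have hnt : (n : ℝ≥0∞) * ENNReal.ofReal t = 2⁻¹ := by
        rw [← ENNReal.ofReal_natCast, ← ENNReal.ofReal_mul n.cast_nonneg,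
          show (n : ℝ) * t = 2⁻¹ by rw [ht]; field_simp, ENNReal.ofReal_inv_of_pos two_pos,
          ENNReal.ofReal_ofNat]
      simpa [hnt, ENNReal.one_sub_inv_two] using one_sub_le_measure_forall_notMem_Icc_of_isRD hRD t
  calc ENNReal.ofReal (1 / (8 * n)) = ENNReal.ofReal (t / 2) * 2⁻¹ := by
        rw [← ENNReal.ofReal_ofNat 2, ← ENNReal.ofReal_inv_of_pos two_pos,
          ← ENNReal.ofReal_mul (by positivity), ht]
        congr 1
        field_simp
        ring
    _ ≤ ENNReal.ofReal (t / 2) * P {ω | ∀ i, X i ω ∉ Icc 0 t} := by gcongr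
    _ ≤ _ := ofReal_half_mul_measure_le_iSup_risk P hX hnoise.1 hmeas ht01

/-- minimax lower bound `1/(8n)` on the class `S₀`, for designs (DD) or (RD). -/
theorem stmt8
    (σ : ℝ) (hσ : 0 < σ)
    (Ω : Type*) [MeasurableSpace Ω] (P : Measure Ω) [IsProbabilityMeasure P]
    (n : ℕ) (hn : 1 ≤ n)
    (X ξ : Fin n → Ω → ℝ)
    (hdesign : IsDD n X ∨ IsRD P n X)
    (hnoise : IsIidSubgaussian P n ξ σ)
    (hindep : NoiseIndepDesign P n X ξ)
    (Ghat : (Fin n → ℝ × ℝ) → ℝ × ℝ)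
    (hmeas : Measurable Ghat)
    (hrange : ∀ v, (Ghat v).1 ∈ Set.Icc (0:ℝ) 1 ∧ (Ghat v).2 ∈ Set.Icc (0:ℝ) 1) :
    ENNReal.ofReal (1 / (8 * n)) ≤
      ⨆ (θ : ℝ) (_ : θ ∈ Set.Icc (0:ℝ) 1),
        ∫⁻ ω, ENNReal.ofReal
          (sd (Ghat (fun i => (X i ω, obsY X ξ 0 θ i ω))).1
              (Ghat (fun i => (X i ω, obsY X ξ 0 θ i ω))).2 0 θ) ∂P :=
  stmt8_general σ Ω P n hn X ξ hdesign hnoise Ghat hmeas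
end

section
/- Let X_1 ≤ X_2 ≤ … ≤ X_n be the increasing reordering of n i.i.d. random variables uniformly distributed on [0,1]. Then for every pair of indices 1 ≤ k < l ≤ n, every h > 0 and every u > 0, P[ X_l − X_k > h ] ≤ n · exp( −(n−1) h (1 − e^{−u}) + u(l − k) ). -/
open MeasureTheory ProbabilityTheory Set Filter Real
open scoped ENNReal NNReal Topology symmDiff

/-!
On the event `X_l - X_k > h`, let `j` be the sample with `U_j = X_k`. Then `U_j ∈ [0, 1 - h]`
and the window `(U_j, U_j + h]` contains at most `l - k - 1` of the other samples (only
`X_{k+1}, …, X_{l-1}` can lie there). Markov's inequality for `e^{-u N_j}`, where `N_j` counts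
the other samples in the window, bounds the probability of this by `e^{u(l-k)} E[e^{-u N_j}]`.
Conditionally on `U_j = t ≤ 1 - h`, the other `n - 1` samples fall in the window independently,
each with probability `h`, so `E[e^{-u N_j}] ≤ (1 - h(1 - e^{-u}))^{n-1} ≤ e^{-(n-1)h(1-e^{-u})}`.
A union bound over `j` gives the factor `n`.
-/

theorem Monotone.filter_mem_Ioo_subset {α β : Type*} [LinearOrder α] [LocallyFiniteOrder α]
    [Fintype α] [LinearOrder β] {x : α → β} (hx : Monotone x) (a b : α) :
    Finset.univ.filter (fun i => x i ∈ Set.Ioo (x a) (x b)) ⊆ Finset.Ioo a b := by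
  intro i hi
  simp only [Finset.mem_filter, Finset.mem_univ, true_and, Set.mem_Ioo] at hi
  rw [Finset.mem_Ioo]
  exact ⟨hx.reflect_lt hi.1, hx.reflect_lt hi.2⟩

theorem pow_le_prod_ite_of_card_filter_le {ι M : Type*} [CommMonoid M] [PartialOrder M]
    [IsOrderedMonoid M] {s : Finset ι} {p : ι → Prop} [DecidablePred p] {a : M} (ha : a ≤ 1)
    {m : ℕ} (hm : (s.filter p).card ≤ m) :
    a ^ m ≤ ∏ i ∈ s, if p i then a else 1 := by
  rw [Finset.prod_ite, Finset.prod_const, Finset.prod_const_one, mul_one]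
  exact pow_le_pow_right_of_le_one' ha hm

section Independence

variable {Ω α β : Type*} [MeasurableSpace Ω] [MeasurableSpace α] [MeasurableSpace β]
  {P : Measure Ω} [IsProbabilityMeasure P]

theorem ProbabilityTheory.IndepFun.lintegral_comp_eq {A : Ω → α} {V : Ω → β}
    (hA : Measurable A) (hV : Measurable V) (hAV : IndepFun A V P) {F : α → β → ℝ≥0∞}
    (hF : Measurable (Function.uncurry F)) :
    ∫⁻ ω, F (A ω) (V ω) ∂P = ∫⁻ a, ∫⁻ ω, F a (V ω) ∂P ∂(P.map A) := by
  have hlaw : P.map (fun ω => (A ω, V ω)) = (P.map A).prod (P.map V) :=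
    (indepFun_iff_map_prod_eq_prod_map_map hA.aemeasurable hV.aemeasurable).mp hAV
  calc ∫⁻ ω, F (A ω) (V ω) ∂P = ∫⁻ q, Function.uncurry F q ∂(P.map fun ω => (A ω, V ω)) :=
        (lintegral_map hF (hA.prodMk hV)).symm
    _ = ∫⁻ a, ∫⁻ b, F a b ∂(P.map V) ∂(P.map A) := by
        rw [hlaw, lintegral_prod _ hF.aemeasurable]; rfl
    _ = ∫⁻ a, ∫⁻ ω, F a (V ω) ∂P ∂(P.map A) := by
        congr with a
        exact lintegral_map (hF.comp measurable_prodMk_left) hV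

theorem ProbabilityTheory.iIndepFun.lintegral_mul_prod_compl {ι : Type*} [Fintype ι]
    [DecidableEq ι] {U : ι → Ω → α} (hU : ∀ i, Measurable (U i)) (hind : iIndepFun U P)
    {g : α → ℝ≥0∞} (hg : Measurable g) {w : α → α → ℝ≥0∞}
    (hw : Measurable (Function.uncurry w)) (j : ι) :
    ∫⁻ ω, g (U j ω) * ∏ i ∈ {j}ᶜ, w (U j ω) (U i ω) ∂P
      = ∫⁻ a, g a * ∏ i ∈ {j}ᶜ, ∫⁻ ω, w a (U i ω) ∂P ∂(P.map (U j)) := by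
  set s : Finset ι := {j}ᶜ
  let V : Ω → s → α := fun ω i => U i ω
  have hV : Measurable V := measurable_pi_lambda _ fun i => hU i
  have hjV : IndepFun (U j) V P :=
    (hind.indepFun_finset {j} s (by simp [s]) hU).comp
      (φ := fun v : ({j} : Finset ι) → α => v ⟨j, Finset.mem_singleton_self j⟩)
      (measurable_pi_apply _) measurable_id
  have hF : Measurable (Function.uncurry fun a (v : s → α) => g a * ∏ i : s, w a (v i)) :=
    (hg.comp measurable_fst).mul <| Finset.measurable_prod _ fun i _ =>
      hw.comp (measurable_fst.prodMk ((measurable_pi_apply i).comp measurable_snd))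
  have key := hjV.lintegral_comp_eq (hU j) hV hF
  refine (lintegral_congr fun ω => ?_).trans (key.trans (lintegral_congr fun a => ?_))
  · rw [← Finset.prod_coe_sort s]
  have hwU : ∀ i, Measurable fun ω => w a (U i ω) := fun i =>
    hw.comp (measurable_const.prodMk (hU i))
  have hprod : ∫⁻ ω, ∏ i : s, w a (V ω i) ∂P = ∏ i ∈ s, ∫⁻ ω, w a (U i ω) ∂P :=
    (lintegral_congr fun ω => Finset.prod_coe_sort s fun i => w a (U i ω)).trans
      (lintegral_prod_eq_prod_lintegral_of_indepFun s _
        (hind.comp (fun _ => w a) fun _ => hw.comp measurable_prodMk_left) hwU)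
  rw [lintegral_const_mul _ (Finset.univ.measurable_prod fun (i : s) _ => hwU i), hprod]

end Independence

theorem lintegral_ite_le_exp {α : Type*} [MeasurableSpace α] {μ : Measure α}
    [IsProbabilityMeasure μ] {S : Set α} [DecidablePred (· ∈ S)] (hS : MeasurableSet S)
    {c : ℝ} (hc : 0 ≤ c) :
    ∫⁻ x, (if x ∈ S then ENNReal.ofReal c else 1) ∂μ
      ≤ ENNReal.ofReal (exp (-(μ.real S * (1 - c)))) := by
  have hsplit : ∫⁻ x, (if x ∈ S then ENNReal.ofReal c else 1) ∂μ
      = ENNReal.ofReal (c * μ.real S + μ.real Sᶜ) := by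
    change ∫⁻ x, S.piecewise (fun _ => ENNReal.ofReal c) (fun _ => 1) x ∂μ = _
    rw [lintegral_piecewise hS, setLIntegral_const, setLIntegral_const,
      one_mul, ENNReal.ofReal_add (by positivity) measureReal_nonneg,
      ENNReal.ofReal_mul hc, ofReal_measureReal, ofReal_measureReal]
  rw [hsplit, probReal_compl_eq_one_sub hS]
  refine ENNReal.ofReal_le_ofReal ?_
  linarith [add_one_le_exp (-(μ.real S * (1 - c)))]

theorem Monotone.card_filter_mem_Ioc_le {α : Type*} [LinearOrder α] [LocallyFiniteOrder α]
    [Fintype α] {x : α → ℝ} (hx : Monotone x) {k l : α} {h : ℝ} (hkl : x k + h < x l) :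
    (Finset.univ.filter fun i => x i ∈ Ioc (x k) (x k + h)).card ≤ (Finset.Ioo k l).card := by
  refine Finset.card_le_card (subset_trans ?_ (hx.filter_mem_Ioo_subset k l))
  intro i hi
  simp only [Finset.mem_filter, Finset.mem_univ, true_and] at hi ⊢
  exact ⟨hi.1, hi.2.trans_lt hkl⟩

noncomputable def windowWeight {ι : Type*} [Fintype ι] [DecidableEq ι] (c h : ℝ) (v : ι → ℝ)
    (j : ι) : ℝ≥0∞ :=
  (if v j ∈ Icc 0 (1 - h) then 1 else 0) *
    ∏ i ∈ {j}ᶜ, if v i ∈ Ioc (v j) (v j + h) then ENNReal.ofReal c else 1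

theorem pow_card_Ioo_le_windowWeight {α : Type*} [LinearOrder α] [LocallyFiniteOrder α]
    [Fintype α] {x v : α → ℝ} (hx : Monotone x) (σ : Equiv.Perm α) (hxv : ∀ i, x i = v (σ i))
    (hv : ∀ i, v i ∈ Icc (0 : ℝ) 1) {k l : α} {c h : ℝ} (hc : c ≤ 1) (hkl : h < x l - x k) :
    ENNReal.ofReal c ^ (Finset.Ioo k l).card ≤ windowWeight c h v (σ k) := by
  have hstart : v (σ k) ∈ Icc 0 (1 - h) := by
    have hk := hv (σ k)
    have hl := hv (σ l)
    rw [← hxv] at hk hl ⊢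
    exact ⟨hk.1, by linarith [hl.2]⟩
  have hcount : (({σ k}ᶜ : Finset α).filter fun i => v i ∈ Ioc (v (σ k)) (v (σ k) + h)).card
      ≤ (Finset.Ioo k l).card := by
    rw [← hxv]
    calc _ ≤ (Finset.univ.filter fun i => v i ∈ Ioc (x k) (x k + h)).card :=
          Finset.card_le_card (Finset.filter_subset_filter _ (Finset.subset_univ _))
      _ = (Finset.univ.filter fun i => x i ∈ Ioc (x k) (x k + h)).card :=
          (Finset.card_equiv σ fun i => by simp [hxv]).symm
      _ ≤ _ := hx.card_filter_mem_Ioc_le (by linarith)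
  rw [windowWeight, if_pos hstart, one_mul]
  exact pow_le_prod_ite_of_card_filter_le (ENNReal.ofReal_le_one.mpr hc) hcount

theorem measurable_windowWeight {ι : Type*} [Fintype ι] [DecidableEq ι] (c h : ℝ) (j : ι) :
    Measurable fun v : ι → ℝ => windowWeight c h v j := by
  have hj := measurable_pi_apply (X := fun _ : ι => ℝ) j
  refine (Measurable.ite (measurableSet_Icc.preimage hj) measurable_const
    measurable_const).mul (Finset.measurable_prod _ fun i _ => Measurable.ite ?_ measurable_const
    measurable_const)
  exact (measurableSet_lt hj (measurable_pi_apply i)).inter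
    (measurableSet_le (measurable_pi_apply i) (hj.add_const h))

theorem measureReal_restrict_Icc_Ioc {t h : ℝ} (ht : 0 ≤ t) (hh : 0 ≤ h) (hth : t + h ≤ 1) :
    (volume.restrict (Icc (0 : ℝ) 1)).real (Ioc t (t + h)) = h := by
  rw [measureReal_restrict_apply measurableSet_Ioc,
    inter_eq_left.mpr (Ioc_subset_Icc_self.trans (Icc_subset_Icc ht hth)),
    Real.volume_real_Ioc_of_le (by linarith), add_sub_cancel_left]

theorem lintegral_windowWeight_le {Ω ι : Type*} [MeasurableSpace Ω] {P : Measure Ω}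
    [IsProbabilityMeasure P] [Fintype ι] [DecidableEq ι] {U : ι → Ω → ℝ}
    (hU : ∀ i, Measurable (U i)) (hind : iIndepFun U P)
    (hlaw : ∀ i, P.map (U i) = volume.restrict (Icc (0 : ℝ) 1)) {c h : ℝ} (hc : 0 ≤ c)
    (hh : 0 ≤ h) (j : ι) :
    ∫⁻ ω, windowWeight c h (fun i => U i ω) j ∂P
      ≤ ENNReal.ofReal (exp (-(h * (1 - c)))) ^ (Fintype.card ι - 1) := by
  have : IsProbabilityMeasure (volume.restrict (Icc (0 : ℝ) 1)) := ⟨by simp⟩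
  have hw : Measurable (Function.uncurry fun t x : ℝ =>
      if x ∈ Ioc t (t + h) then ENNReal.ofReal c else 1) :=
    Measurable.ite ((measurableSet_lt measurable_fst measurable_snd).inter
      (measurableSet_le measurable_snd (measurable_fst.add_const h))) measurable_const
      measurable_const
  have hg : Measurable fun t : ℝ => if t ∈ Icc 0 (1 - h) then (1 : ℝ≥0∞) else 0 :=
    Measurable.ite measurableSet_Icc measurable_const measurable_const
  refine (hind.lintegral_mul_prod_compl hU hg hw j).trans_le ?_
  calc _ ≤ ∫⁻ _, ENNReal.ofReal (exp (-(h * (1 - c)))) ^ (Fintype.card ι - 1) ∂(P.map (U j)) := by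
        refine lintegral_mono fun t => ?_
        by_cases ht : t ∈ Icc 0 (1 - h)
        · rw [if_pos ht, one_mul, ← Finset.card_singleton j, ← Finset.card_compl]
          refine Finset.prod_le_pow_card _ _ _ fun i _ => ?_
          rw [← lintegral_map (f := fun x => if x ∈ Ioc t (t + h) then ENNReal.ofReal c else 1)
            (Measurable.ite measurableSet_Ioc measurable_const measurable_const) (hU i), hlaw i]
          refine (lintegral_ite_le_exp measurableSet_Ioc hc).trans_eq ?_
          rw [measureReal_restrict_Icc_Ioc ht.1 hh (by linarith [ht.2])]
        · rw [if_neg ht, zero_mul]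
          exact zero_le
    _ = _ := by
      have := Measure.isProbabilityMeasure_map (μ := P) (hU j).aemeasurable
      rw [lintegral_const, measure_univ, mul_one]

theorem measure_pow_le_windowWeight_le {Ω ι : Type*} [MeasurableSpace Ω] {P : Measure Ω}
    [IsProbabilityMeasure P] [Fintype ι] [DecidableEq ι] {U : ι → Ω → ℝ}
    (hU : ∀ i, Measurable (U i)) (hind : iIndepFun U P)
    (hlaw : ∀ i, P.map (U i) = volume.restrict (Icc (0 : ℝ) 1)) {c h : ℝ} (hc : 0 < c)
    (hh : 0 ≤ h) (j : ι) (m : ℕ) :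
    P {ω | ENNReal.ofReal c ^ m ≤ windowWeight c h (fun i => U i ω) j}
      ≤ ENNReal.ofReal ((c ^ m)⁻¹ * exp (-(h * (1 - c))) ^ (Fintype.card ι - 1)) := by
  have hW : Measurable fun ω => windowWeight c h (fun i => U i ω) j :=
    (measurable_windowWeight c h j).comp (measurable_pi_lambda _ hU)
  calc _ ≤ (∫⁻ ω, windowWeight c h (fun i => U i ω) j ∂P) / ENNReal.ofReal c ^ m :=
        meas_ge_le_lintegral_div hW.aemeasurable (by positivity) (by finiteness)
    _ ≤ ENNReal.ofReal (exp (-(h * (1 - c)))) ^ (Fintype.card ι - 1) / ENNReal.ofReal c ^ m := by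
        gcongr
        exact lintegral_windowWeight_le hU hind hlaw hc.le hh j
    _ = _ := by
        rw [← ENNReal.ofReal_pow hc.le, ← ENNReal.ofReal_pow (exp_nonneg _),
          ← ENNReal.ofReal_div_of_pos (pow_pos hc m), div_eq_inv_mul]

/-- Lemma on order statistics of the uniform design: for the
increasing reordering `X₁ ≤ … ≤ Xₙ` of n i.i.d. uniforms on `[0,1]`,
`P[X_l - X_k > h] ≤ n exp(-(n-1)h(1-e^{-u}) + u(l-k))`. -/
theorem stmt16
    (Ω : Type*) [MeasurableSpace Ω] (P : Measure Ω) [IsProbabilityMeasure P]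
    (n : ℕ) (X : Fin n → Ω → ℝ)
    (hX : IsRD P n X)
    (k l : Fin n) (hkl : k < l)
    (h : ℝ) (hh : 0 < h) (u : ℝ) (hu : 0 < u) :
    P {ω | h < X l ω - X k ω}
      ≤ ENNReal.ofReal ((n : ℝ) *
          Real.exp (-((n : ℝ) - 1) * h * (1 - Real.exp (-u))
            + u * (((l : ℕ) : ℝ) - ((k : ℕ) : ℝ)))) := by
  obtain ⟨-, hXmono, U, hU, hind, hlaw, hperm⟩ := hX
  set m := (Finset.Ioo k l).card
  let E : Fin n → Set Ω := fun j =>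
    {ω | ENNReal.ofReal (exp (-u)) ^ m ≤ windowWeight (exp (-u)) h (fun i => U i ω) j}
  have hunit : ∀ᵐ ω ∂P, ∀ i, U i ω ∈ Icc (0 : ℝ) 1 := ae_all_iff.mpr fun i =>
    ae_of_ae_map (hU i).aemeasurable (by rw [hlaw i]; exact ae_restrict_mem measurableSet_Icc)
  have hcover : {ω | h < X l ω - X k ω} ≤ᵐ[P] ⋃ j, E j := by
    filter_upwards [hunit] with ω hω hlk
    obtain ⟨σ, hσ⟩ := hperm ω
    exact mem_iUnion.mpr ⟨σ k, pow_card_Ioo_le_windowWeight (hXmono ω) σ hσ hω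
      (exp_le_one_iff.mpr (by linarith)) hlk⟩
  have hexponent : (exp (-u) ^ m)⁻¹ * exp (-(h * (1 - exp (-u)))) ^ (n - 1)
      ≤ exp (-((n : ℝ) - 1) * h * (1 - exp (-u)) + u * (((l : ℕ) : ℝ) - ((k : ℕ) : ℝ))) := by
    have hm : m + (k : ℕ) ≤ l := by
      simp only [m, Fin.card_Ioo]
      omega
    rw [← exp_nat_mul, ← exp_nat_mul, ← exp_neg, ← exp_add, exp_le_exp, Nat.cast_pred (Fin.pos k)]
    nlinarith [show (m : ℝ) + (k : ℕ) ≤ (l : ℕ) by exact_mod_cast hm]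
  calc P {ω | h < X l ω - X k ω} ≤ P (⋃ j, E j) := measure_mono_ae hcover
    _ ≤ ∑ j, P (E j) := measure_iUnion_fintype_le _ _
    _ ≤ ∑ _j : Fin n, ENNReal.ofReal ((exp (-u) ^ m)⁻¹ * exp (-(h * (1 - exp (-u)))) ^ (n - 1)) :=
        Finset.sum_le_sum fun j _ => by
          simpa using measure_pow_le_windowWeight_le hU hind hlaw (exp_pos _) hh.le j m
    _ ≤ _ := by
        rw [Finset.sum_const, Finset.card_univ, Fintype.card_fin, nsmul_eq_mul,
          ← ENNReal.ofReal_natCast, ← ENNReal.ofReal_mul (Nat.cast_nonneg _)]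
        exact ENNReal.ofReal_le_ofReal (mul_le_mul_of_nonneg_left hexponent (Nat.cast_nonneg _))
end

section
/- Let A ≥ 1 and α > 0 be real numbers, and let Z be a nonnegative random variable satisfying E[Z^q] ≤ A (2q)! α^{2q} for every positive integer q. Then for all x ≥ 0, P[ Z ≥ α²(2x + 4A) ] ≤ exp( −x / (8√x + 192A) ). -/
/-!
Markov's inequality applied to `Z ^ q` turns the moment bound into
`P[Z ≥ α² D] ≤ A (2q)! / D ^ q` with `D = 2x + 4A`, and it remains to choose `q`.
Writing `E = x / (8√x + 192A)`: if `E ≤ log 2` take `q = 1`, since `2A / D ≤ 1/2`.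
Otherwise `x` is large against both `E` and `A`, and `q = ⌊(E + 2√A) / 2⌋` satisfies
`(e · 2q)² ≤ D`, so `(2q)! / D ^ q ≤ ((2q)² / D) ^ q ≤ e ^ (-2q)`; together with
`A ≤ e ^ (2√A - 2)` and `2q > E + 2√A - 2` this gives `A (2q)! / D ^ q ≤ e ^ (-E)`.
-/

open MeasureTheory Real

lemma measure_le_le_lintegral_pow_div {Ω : Type*} [MeasurableSpace Ω] {μ : Measure Ω}
    {Z : Ω → ℝ} (hZ : AEMeasurable Z μ) {t : ℝ} (ht : 0 < t) (q : ℕ) :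
    μ {ω | t ≤ Z ω} ≤ (∫⁻ ω, ENNReal.ofReal (Z ω ^ q) ∂μ) / ENNReal.ofReal (t ^ q) := by
  have hsub : {ω | t ≤ Z ω} ⊆ {ω | ENNReal.ofReal (t ^ q) ≤ ENNReal.ofReal (Z ω ^ q)} :=
    fun ω hω => ENNReal.ofReal_le_ofReal (pow_le_pow_left₀ ht.le hω q)
  refine (measure_mono hsub).trans (meas_ge_le_lintegral_div ?_ ?_ ENNReal.ofReal_ne_top)
  · exact ENNReal.measurable_ofReal.comp_aemeasurable (hZ.pow_const q)
  · exact (ENNReal.ofReal_pos.mpr (pow_pos ht q)).ne'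

lemma le_exp_two_mul_sqrt_sub_two {A : ℝ} (hA : 0 ≤ A) : A ≤ exp (2 * √A - 2) := by
  have h : √A ≤ exp (√A - 1) := by linarith [add_one_le_exp (√A - 1)]
  calc A = √A ^ 2 := (sq_sqrt hA).symm
    _ ≤ exp (√A - 1) ^ 2 := pow_le_pow_left₀ (sqrt_nonneg A) h 2
    _ = exp (2 * √A - 2) := by rw [← exp_nat_mul]; ring_nf

lemma factorial_two_mul_div_pow_le_exp_neg {D : ℝ} {q : ℕ} (hD : 0 < D)
    (hq : (exp 1 * (2 * q)) ^ 2 ≤ D) :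
    ((2 * q).factorial : ℝ) / D ^ q ≤ exp (-(2 * q)) := by
  have hratio : (2 * (q : ℝ)) ^ 2 / D ≤ exp (-2) := by
    rw [div_le_iff₀ hD, exp_neg, inv_mul_eq_div, le_div_iff₀ (exp_pos 2),
      show exp 2 = exp 1 ^ 2 by rw [← exp_nat_mul]; norm_num]
    linarith
  calc ((2 * q).factorial : ℝ) / D ^ q ≤ (2 * (q : ℝ)) ^ (2 * q) / D ^ q := by
        gcongr; exact_mod_cast Nat.factorial_le_pow (2 * q)
    _ = ((2 * (q : ℝ)) ^ 2 / D) ^ q := by rw [pow_mul, div_pow]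
    _ ≤ exp (-2) ^ q := by gcongr
    _ = exp (-(2 * q)) := by rw [← exp_nat_mul]; ring_nf

lemma mul_factorial_two_mul_div_pow_le_exp_neg {A D E : ℝ} {q : ℕ} (hA : 0 ≤ A) (hD : 0 < D)
    (hqD : (exp 1 * (2 * q)) ^ 2 ≤ D) (hqE : E + 2 * √A - 2 ≤ 2 * q) :
    A * (2 * q).factorial / D ^ q ≤ exp (-E) :=
  calc A * (2 * q).factorial / D ^ q = A * ((2 * q).factorial / D ^ q) := mul_div_assoc ..
    _ ≤ exp (2 * √A - 2) * exp (-(2 * q)) :=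
        mul_le_mul (le_exp_two_mul_sqrt_sub_two hA)
          (factorial_two_mul_div_pow_le_exp_neg hD hqD) (by positivity) (exp_pos _).le
    _ = exp (2 * √A - 2 - 2 * q) := by rw [← exp_add]; ring_nf
    _ ≤ exp (-E) := exp_le_exp.mpr (by linarith)

lemma exists_mul_factorial_two_mul_div_pow_le_exp {A x : ℝ} (hA : 1 ≤ A) (hx : 0 ≤ x) :
    ∃ q : ℕ, 1 ≤ q ∧
      A * (2 * q).factorial / (2 * x + 4 * A) ^ q ≤ exp (-x / (8 * √x + 192 * A)) := by
  set s := √x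
  set E := x / (8 * s + 192 * A)
  have hs : s ^ 2 = x := sq_sqrt hx
  have hs0 : 0 ≤ s := sqrt_nonneg x
  have hden : 0 < 8 * s + 192 * A := by linarith
  have hxE : E * (8 * s + 192 * A) = x := div_mul_cancel₀ x hden.ne'
  have hD : 0 < 2 * x + 4 * A := by linarith
  rw [neg_div]
  rcases le_or_gt E (log 2) with hsmall | hlarge
  · refine ⟨1, le_rfl, ?_⟩
    have hhalf : 1 / 2 ≤ exp (-E) := by
      rw [exp_neg, one_div]
      exact inv_anti₀ (exp_pos E) ((exp_le_exp.mpr hsmall).trans (exp_log two_pos).le)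
    have hq1 : A * (2 * 1).factorial / (2 * x + 4 * A) ^ 1 ≤ 1 / 2 := by
      rw [pow_one, div_le_div_iff₀ hD two_pos]
      norm_num [Nat.factorial]
      linarith
    exact hq1.trans hhalf
  · have hE : 0.69 < E := lt_trans (by linarith [log_two_gt_d9]) hlarge
    have hsqA : 1 ≤ √A := one_le_sqrt.mpr hA
    have hAs : √A ^ 2 = A := sq_sqrt (by linarith)
    have hs_big : 5.5 < s := by nlinarith
    have hs_sqA : 11 * √A ≤ s := by nlinarith
    have hs_E : 8 * E ≤ s := by nlinarith
    set q := ⌊(E + 2 * √A) / 2⌋₊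
    have hq_le : 2 * (q : ℝ) ≤ E + 2 * √A := by
      linarith [Nat.floor_le (show 0 ≤ (E + 2 * √A) / 2 by linarith)]
    have hq_gt : E + 2 * √A - 2 < 2 * (q : ℝ) := by
      linarith [Nat.lt_floor_add_one ((E + 2 * √A) / 2)]
    refine ⟨q, Nat.le_floor (by push_cast; linarith), ?_⟩
    refine mul_factorial_two_mul_div_pow_le_exp_neg (by linarith) hD ?_ hq_gt.le
    have he : exp 1 ≤ 2.72 := by linarith [exp_one_lt_d9]
    have hes : exp 1 * (2 * q) ≤ s := by
      nlinarith [mul_le_mul he hq_le (by positivity) (by norm_num), exp_pos 1]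
    nlinarith [pow_le_pow_left₀ (by positivity) hes 2]

theorem stmt19_general
    (Ω : Type*) [MeasurableSpace Ω] (P : Measure Ω) [IsProbabilityMeasure P]
    (A α : ℝ) (hA : 1 ≤ A) (hα : 0 < α)
    (Z : Ω → ℝ) (hZmeas : Measurable Z)
    (hmom : ∀ q : ℕ, 1 ≤ q →
      ∫⁻ ω, ENNReal.ofReal (Z ω ^ q) ∂P
        ≤ ENNReal.ofReal (A * (Nat.factorial (2 * q) : ℝ) * α ^ (2 * q)))
    (x : ℝ) (hx : 0 ≤ x) :
    P {ω | α ^ 2 * (2 * x + 4 * A) ≤ Z ω}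
      ≤ ENNReal.ofReal (Real.exp (-x / (8 * Real.sqrt x + 192 * A))) := by
  obtain ⟨q, hq, hbound⟩ := exists_mul_factorial_two_mul_div_pow_le_exp hA hx
  have hD : 0 < 2 * x + 4 * A := by linarith
  have ht : 0 < (α ^ 2 * (2 * x + 4 * A)) ^ q := by positivity
  calc P {ω | α ^ 2 * (2 * x + 4 * A) ≤ Z ω}
      ≤ (∫⁻ ω, ENNReal.ofReal (Z ω ^ q) ∂P) / ENNReal.ofReal ((α ^ 2 * (2 * x + 4 * A)) ^ q) :=
        measure_le_le_lintegral_pow_div hZmeas.aemeasurable (by positivity) q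
    _ ≤ ENNReal.ofReal (A * (2 * q).factorial * α ^ (2 * q))
          / ENNReal.ofReal ((α ^ 2 * (2 * x + 4 * A)) ^ q) := by gcongr; exact hmom q hq
    _ = ENNReal.ofReal (A * (2 * q).factorial / (2 * x + 4 * A) ^ q) := by
        rw [← ENNReal.ofReal_div_of_pos ht, mul_pow, ← pow_mul]
        field_simp
    _ ≤ _ := ENNReal.ofReal_le_ofReal hbound

/-- a Bernstein-type deviation inequality for a nonnegative random
variable `Z` with `E[Z^q] ≤ A (2q)! α^{2q}` for every positive integer `q`. -/
theorem stmt19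
    (Ω : Type*) [MeasurableSpace Ω] (P : Measure Ω) [IsProbabilityMeasure P]
    (A α : ℝ) (hA : 1 ≤ A) (hα : 0 < α)
    (Z : Ω → ℝ) (hZmeas : Measurable Z) (hZnonneg : ∀ ω, 0 ≤ Z ω)
    (hmom : ∀ q : ℕ, 1 ≤ q →
      ∫⁻ ω, ENNReal.ofReal (Z ω ^ q) ∂P
        ≤ ENNReal.ofReal (A * (Nat.factorial (2 * q) : ℝ) * α ^ (2 * q)))
    (x : ℝ) (hx : 0 ≤ x) :
    P {ω | α ^ 2 * (2 * x + 4 * A) ≤ Z ω}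
      ≤ ENNReal.ofReal (Real.exp (-x / (8 * Real.sqrt x + 192 * A))) :=
  stmt19_general Ω P A α hA hα Z hZmeas hmom x hx
end
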